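/- arXiv:2008.09423 — 7 statements merged into one kernel-verified Lean document; each statement's English description precedes it below -/
import Mathlib

section
/- Let G be a group and let C be a subgroup of G contained in the centre Z(G). If the quotient group G/C is finite, then the commutator subgroup [G, G] of G is finite. -/
/-! Since `C` is central, a commutator `⁅a, b⁆` depends only on the cosets `a C` and `b C`,
so `G` has finitely many commutators. By Schur's bound from Schreier's lemma
(`card_commutator_le_of_finite_commutatorSet`), a group with finitely many commutators has a
finite commutator subgroup. -/

open Subgroup
open scoped commutatorElement

theorem commutatorElement_mul_mem_center {G : Type*} [Group G] (a b : G) {c d : G}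
    (hc : c ∈ center G) (hd : d ∈ center G) : ⁅a * c, b * d⁆ = ⁅a, b⁆ := by
  rw [mem_center_iff] at hc hd
  simp only [commutatorElement_def, mul_inv_rev]
  calc a * c * (b * d) * (c⁻¹ * a⁻¹) * (d⁻¹ * b⁻¹)
      = a * (b * d * c) * c⁻¹ * a⁻¹ * d⁻¹ * b⁻¹ := by rw [hc (b * d)]; group
    _ = a * b * (a⁻¹ * d) * d⁻¹ * b⁻¹ := by rw [hd a⁻¹]; group
    _ = a * b * a⁻¹ * b⁻¹ := by group

theorem commutatorSet_subset_range_out {G : Type*} [Group G] {N : Subgroup G}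
    (hN : N ≤ center G) :
    commutatorSet G ⊆ Set.range fun p : (G ⧸ N) × (G ⧸ N) => ⁅p.1.out, p.2.out⁆ := by
  rintro _ ⟨a, b, rfl⟩
  obtain ⟨c, hac⟩ := QuotientGroup.mk_out_eq_mul N a
  obtain ⟨d, hbd⟩ := QuotientGroup.mk_out_eq_mul N b
  refine ⟨((a : G ⧸ N), (b : G ⧸ N)), ?_⟩
  simp only [hac, hbd, commutatorElement_mul_mem_center a b (hN c.2) (hN d.2)]

theorem finite_commutatorSet_of_le_center {G : Type*} [Group G] {N : Subgroup G}
    (hN : N ≤ center G) [Finite (G ⧸ N)] : Finite (commutatorSet G) :=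
  ((Set.finite_range _).subset (commutatorSet_subset_range_out hN)).to_subtype

/-- **Schur's Theorem.** If `C` is a subgroup of a group `G` contained in the centre of `G`
and the quotient `G ⧸ C` is finite, then the commutator subgroup of `G` is finite. -/
theorem schur_theorem {G : Type*} [Group G] (C : Subgroup G)
    (hC : C ≤ Subgroup.center G) (h : Finite (G ⧸ C)) :
    Finite (commutator G) := by
  have := finite_commutatorSet_of_le_center hC
  infer_instance
end

section
/- Let G be a group and k a positive integer. If the quotient group G/Z_k(G) is finite, then γ_{k+1}(G) is finite. -/
/-!
Induction on `k`, passing from `G` to `G ⧸ Z(G)`. In the inductive step let `F = γ_{k+1}(G)`.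
The induction hypothesis makes `F Z(G) / Z(G)` finite, and the three subgroups lemma shows that
`F` centralizes `Z_{k+1}(G)`, a subgroup of finite index. Hence a commutator `⁅f, g⁆` with `f ∈ F`
only depends on the cosets `f Z(G)` and `g Z_{k+1}(G)`, so there are finitely many of them; the
same argument inside `F` together with Schur's theorem shows that `⁅F, F⁆` is finite. Modulo
`⁅F, F⁆` the subgroup `F` is abelian and `⁅f, g⁆ ^ n ≡ ⁅f ^ n, g⁆ = 1` for `n = |F Z(G) / Z(G)|`,
so `γ_{k+2}(G) / ⁅F, F⁆` is an abelian group generated by finitely many elements of finite order.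
-/

open Subgroup
open scoped commutatorElement

section Commutators

variable {G : Type*} [Group G]

theorem commutatorElement_mul_left_of_commute {a b c : G} (h : Commute c b) :
    ⁅a * c, b⁆ = ⁅a, b⁆ := by
  rw [commutatorElement_def, commutatorElement_def, mul_assoc a, h.eq]
  group

theorem commutatorElement_mul_right_of_commute {a b c : G} (h : Commute a c) :
    ⁅a, b * c⁆ = ⁅a, b⁆ := by
  rw [commutatorElement_def, commutatorElement_def, ← mul_assoc, mul_assoc _ c, ← h.inv_left.eq]
  group

end Commutators

namespace QuotientGroup

variable {G : Type*} [Group G]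

theorem commute_mk_of_mem_of_mem {F : Subgroup G} [F.Normal] {a b : G}
    (ha : a ∈ F) (hb : b ∈ F) : Commute (a : G ⧸ ⁅F, F⁆) (b : G ⧸ ⁅F, F⁆) := by
  rw [← commutatorElement_eq_one_iff_commute, ← mk'_apply, ← mk'_apply, ← map_commutatorElement,
    mk'_apply, eq_one_iff]
  exact commutator_mem_commutator ha hb

theorem mk_commutatorElement_pow {F : Subgroup G} [F.Normal] {f : G} (hf : f ∈ F)
    (g : G) (n : ℕ) : ((⁅f, g⁆ : G) : G ⧸ ⁅F, F⁆) ^ n = ((⁅f ^ n, g⁆ : G) : G ⧸ ⁅F, F⁆) := by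
  have hconj : g * f⁻¹ * g⁻¹ ∈ F := Normal.conj_mem ‹_› _ (inv_mem hf) g
  have expand (x : G) : ⁅x, g⁆ = x * (g * x⁻¹ * g⁻¹) := by group
  rw [expand, expand, mk_mul, (commute_mk_of_mem_of_mem hf hconj).mul_pow, ← mk_pow, ← mk_pow,
    conj_pow, inv_pow, ← mk_mul]

end QuotientGroup

namespace Subgroup

variable {G : Type*} [Group G]

theorem finite_commutators_of_finite_image {A B N M : Subgroup G}
    (hN : N ≤ centralizer B) (hM : M ≤ centralizer A)
    (hA : ((↑) '' (A : Set G) : Set (G ⧸ N)).Finite)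
    (hB : ((↑) '' (B : Set G) : Set (G ⧸ M)).Finite) :
    {g | ∃ a ∈ A, ∃ b ∈ B, ⁅a, b⁆ = g}.Finite := by
  obtain ⟨SA, hSA, hSAfin, hSAimg⟩ := Set.exists_subset_image_finite_and.mp ⟨_, le_rfl, hA, rfl⟩
  obtain ⟨SB, -, hSBfin, hSBimg⟩ := Set.exists_subset_image_finite_and.mp ⟨_, le_rfl, hB, rfl⟩
  refine (hSAfin.image2 (⁅·, ·⁆) hSBfin).subset ?_
  rintro _ ⟨a, ha, b, hb, rfl⟩
  obtain ⟨a', ha', hmk⟩ : (a : G ⧸ N) ∈ (↑) '' SA := hSAimg ▸ Set.mem_image_of_mem _ ha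
  obtain ⟨b', hb', hmk'⟩ : (b : G ⧸ M) ∈ (↑) '' SB := hSBimg ▸ Set.mem_image_of_mem _ hb
  have hn : a'⁻¹ * a ∈ N := QuotientGroup.eq.mp hmk
  have hm : b'⁻¹ * b ∈ M := QuotientGroup.eq.mp hmk'
  refine ⟨a', ha', b', hb', ?_⟩
  calc ⁅a', b'⁆ = ⁅a', b' * (b'⁻¹ * b)⁆ :=
        (commutatorElement_mul_right_of_commute (mem_centralizer_iff.mp (hM hm) a' (hSA ha'))).symm
    _ = ⁅a' * (a'⁻¹ * a), b⁆ := by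
        rw [mul_inv_cancel_left, commutatorElement_mul_left_of_commute
          (mem_centralizer_iff.mp (hN hn) b hb).symm]
    _ = ⁅a, b⁆ := by rw [mul_inv_cancel_left]

theorem finite_commutator_self_of_finite_commutators {H : Subgroup G}
    (h : {g | ∃ a ∈ H, ∃ b ∈ H, ⁅a, b⁆ = g}.Finite) : Finite (⁅H, H⁆ : Subgroup G) := by
  have : Finite (commutatorSet H) := by
    refine (Set.Finite.of_finite_image (h.subset ?_) Subtype.val_injective.injOn).to_subtype
    rintro _ ⟨_, ⟨a, b, rfl⟩, rfl⟩
    exact ⟨a, a.2, b, b.2, rfl⟩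
  rw [← map_subtype_commutator]
  exact Finite.of_equiv _ (equivMapOfInjective _ _ H.subtype_injective).toEquiv

theorem finite_closure_of_commute_of_isOfFinOrder {S : Set G} (hS : S.Finite)
    (hcomm : ∀ x ∈ S, ∀ y ∈ S, Commute x y) (htors : ∀ x ∈ S, IsOfFinOrder x) :
    Finite (closure S) := by
  have : IsMulCommutative (closure S) := isMulCommutative_closure hcomm
  have : Finite S := hS.to_subtype
  open scoped IsMulCommutative in
  refine CommGroup.finite_of_fg_isMulTorsion (closure S) fun ⟨x, hx⟩ => ?_
  rw [← orderOf_pos_iff, ← orderOf_coe, orderOf_pos_iff]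
  induction hx using closure_induction with
  | mem y hy => exact htors y hy
  | one => exact IsOfFinOrder.one
  | mul y z hy hz hy' hz' =>
    have hyz : Commute y z := congrArg Subtype.val (mul_comm' (⟨y, hy⟩ : closure S) ⟨z, hz⟩)
    exact hyz.isOfFinOrder_mul hy' hz'
  | inv y _ hy' => exact hy'.inv

theorem finite_of_finite_map_mk {H N : Subgroup G} [N.Normal] [Finite N]
    (hH : Finite (H.map (QuotientGroup.mk' N))) : Finite H := by
  rw [((QuotientGroup.mk' N).domRestrict H).finite_iff_finite_ker_range,
    MonoidHom.domRestrict_range, MonoidHom.ker_domRestrict, QuotientGroup.ker_mk']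
  refine ⟨Finite.of_injective (fun x : N.subgroupOf H => (⟨x, x.2⟩ : N)) fun x y hxy => ?_, hH⟩
  exact Subtype.ext (Subtype.ext (congrArg Subtype.val hxy :))

theorem commutator_commutator_le_of_rotate {H₁ H₂ H₃ N : Subgroup G} [N.Normal]
    (h1 : ⁅⁅H₂, H₃⁆, H₁⁆ ≤ N) (h2 : ⁅⁅H₃, H₁⁆, H₂⁆ ≤ N) : ⁅⁅H₁, H₂⁆, H₃⁆ ≤ N := by
  have key (A B C : Subgroup G) : ⁅⁅A, B⁆, C⁆ ≤ N ↔
      ⁅⁅A.map (QuotientGroup.mk' N), B.map (QuotientGroup.mk' N)⁆,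
        C.map (QuotientGroup.mk' N)⁆ = ⊥ := by
    rw [← map_commutator, ← map_commutator, map_eq_bot_iff, QuotientGroup.ker_mk']
  rw [key] at h1 h2 ⊢
  exact commutator_commutator_eq_bot_of_rotate h1 h2

theorem commutator_lowerCentralSeries_upperCentralSeries_le (i j : ℕ) :
    ⁅(⊤ : Subgroup G).lowerCentralSeries i, upperCentralSeries G (i + j + 1)⁆ ≤
      upperCentralSeries G j := by
  induction i generalizing j with
  | zero =>
    rw [lowerCentralSeries_zero, zero_add, commutator_comm]
    exact commutator_upperCentralSeries_top_le G j
  | succ i ih =>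
    rw [lowerCentralSeries_succ]
    apply commutator_commutator_le_of_rotate
    · calc ⁅⁅⊤, upperCentralSeries G (i + 1 + j + 1)⁆, (⊤ : Subgroup G).lowerCentralSeries i⁆
          ≤ ⁅upperCentralSeries G (i + j + 1), (⊤ : Subgroup G).lowerCentralSeries i⁆ := by
            rw [commutator_comm ⊤, Nat.add_right_comm i 1]
            exact commutator_mono (commutator_upperCentralSeries_top_le G _) le_rfl
        _ ≤ upperCentralSeries G j := by rw [commutator_comm]; exact ih j
    · calc ⁅⁅upperCentralSeries G (i + 1 + j + 1), (⊤ : Subgroup G).lowerCentralSeries i⁆, ⊤⁆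
          ≤ ⁅upperCentralSeries G (j + 1), ⊤⁆ := by
            rw [commutator_comm (upperCentralSeries G _), Nat.add_assoc i 1 j, Nat.add_comm 1 j]
            exact commutator_mono (ih (j + 1)) le_rfl
        _ ≤ upperCentralSeries G j := commutator_upperCentralSeries_top_le G j

theorem upperCentralSeries_le_centralizer_lowerCentralSeries (k : ℕ) :
    upperCentralSeries G (k + 1) ≤ centralizer ((⊤ : Subgroup G).lowerCentralSeries k) := by
  rw [← commutator_eq_bot_iff_le_centralizer, commutator_comm, ← le_bot_iff]
  exact commutator_lowerCentralSeries_upperCentralSeries_le k 0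

theorem finite_lowerCentralSeries_succ {k : ℕ} (hU : Finite (G ⧸ upperCentralSeries G (k + 1)))
    (hF : Finite (((⊤ : Subgroup G).lowerCentralSeries k).map (QuotientGroup.mk' (center G)))) :
    Finite ((⊤ : Subgroup G).lowerCentralSeries (k + 1)) := by
  set F := (⊤ : Subgroup G).lowerCentralSeries k
  have hZF : upperCentralSeries G (k + 1) ≤ centralizer F :=
    upperCentralSeries_le_centralizer_lowerCentralSeries k
  have hFF : Finite (⁅F, F⁆ : Subgroup G) :=
    finite_commutator_self_of_finite_commutators
      (finite_commutators_of_finite_image hZF hZF (Set.toFinite _) (Set.toFinite _))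
  have hFG : {g | ∃ a ∈ F, ∃ b ∈ (⊤ : Subgroup G), ⁅a, b⁆ = g}.Finite :=
    finite_commutators_of_finite_image (center_le_centralizer _) hZF
      (by simpa [coe_map] using Set.finite_coe_iff.mp hF) (Set.toFinite _)
  rw [lowerCentralSeries_succ, commutator_def]
  refine finite_of_finite_map_mk (N := ⁅F, F⁆) ?_
  rw [MonoidHom.map_closure]
  refine finite_closure_of_commute_of_isOfFinOrder (hFG.image _) ?_ ?_
  · rintro _ ⟨_, ⟨a, ha, b, -, rfl⟩, rfl⟩ _ ⟨_, ⟨c, hc, d, -, rfl⟩, rfl⟩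
    have hF' : ⁅F, ⊤⁆ ≤ F := commutator_le_left F ⊤
    exact QuotientGroup.commute_mk_of_mem_of_mem (hF' (commutator_mem_commutator ha (mem_top b)))
      (hF' (commutator_mem_commutator hc (mem_top d)))
  · rintro _ ⟨_, ⟨f, hf, g, -, rfl⟩, rfl⟩
    set n := Nat.card (F.map (QuotientGroup.mk' (center G)))
    have hfn : f ^ n ∈ center G := by
      rw [← QuotientGroup.eq_one_iff, QuotientGroup.mk_pow]
      exact congrArg Subtype.val
        (pow_card_eq_one' (x := (⟨f, mem_map_of_mem _ hf⟩ : F.map (QuotientGroup.mk' (center G)))))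
    refine isOfFinOrder_iff_pow_eq_one.mpr ⟨n, Nat.card_pos, ?_⟩
    rw [QuotientGroup.mk'_apply, QuotientGroup.mk_commutatorElement_pow hf,
      commutatorElement_eq_one_iff_commute.mpr (mem_center_iff.mp hfn g).symm, QuotientGroup.mk_one]

theorem finite_quotient_upperCentralSeries_quotient_center {k : ℕ}
    (h : Finite (G ⧸ upperCentralSeries G (k + 1))) :
    Finite ((G ⧸ center G) ⧸ upperCentralSeries (G ⧸ center G) k) :=
  Finite.of_surjective _ (QuotientGroup.map_surjective_of_surjective _ _ _
    (QuotientGroup.mk_surjective.comp (QuotientGroup.mk'_surjective _))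
    (comap_upperCentralSeries_quotient_center k).ge)

end Subgroup

theorem baer_theorem_general {G : Type*} [Group G] (k : ℕ)
    (h : Finite (G ⧸ Subgroup.upperCentralSeries G k)) :
    Finite ((⊤ : Subgroup G).lowerCentralSeries k) := by
  induction k generalizing G with
  | zero =>
    rw [Subgroup.upperCentralSeries_zero] at h
    have : Finite G := Finite.of_equiv _ QuotientGroup.quotientBot.toEquiv
    infer_instance
  | succ k ih =>
    refine finite_lowerCentralSeries_succ h ?_
    rw [map_lowerCentralSeries, map_top_of_surjective _ (QuotientGroup.mk'_surjective _)]
    exact ih (finite_quotient_upperCentralSeries_quotient_center h)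

/-- **Baer's Theorem.** If `G ⧸ Z_k(G)` is finite for a positive integer `k`, then
`γ_{k+1}(G)` (i.e. `lowerCentralSeries G k`, since `γ_1(G) = lowerCentralSeries G 0 = G`)
is finite. -/
theorem baer_theorem {G : Type*} [Group G] (k : ℕ) (hk : 0 < k)
    (h : Finite (G ⧸ Subgroup.upperCentralSeries G k)) :
    Finite ((⊤ : Subgroup G).lowerCentralSeries k) :=
  baer_theorem_general k h
end

section
/- Let 1 → N → H → G → 1 be an extension of groups (i.e., a surjective group homomorphism H → G with kernel N) such that every element of N lies in 𝔇_n(H), for a fixed positive integer n. If G is finite, then Γ_{n+1}(H) is finite. -/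
open scoped commutatorElement

/-- The iterated commutator `[⋯[[h, x₁], x₂], ⋯, xₖ]` of an element with a list of
elements. -/
def iteratedCommutator {H : Type*} [Group H] : H → List H → H
  | h, [] => h
  | h, x :: xs => iteratedCommutator ⁅h, x⁆ xs

/-- `𝔇ₙ(H)`: the set of `h ∈ H` such that `[⋯[[h, x₁], x₂], ⋯, xₙ] = 1` whenever
`xᵢ ∈ Γᵢ(H)` for `i = 1, …, n`, where `Γᵢ(H) = derivedSeries H (i - 1)` is the derived
series (`Γ₁(H) = H`). -/
def frakD (H : Type*) [Group H] (n : ℕ) : Set H :=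
  {h | ∀ xs : List H, xs.length = n →
    (∀ i : Fin xs.length, xs.get i ∈ derivedSeries H i) → iteratedCommutator h xs = 1}

/-!
Write `𝔇ₙˢ(H)` for the variant of `𝔇ₙ(H)` in which `xᵢ` ranges over `Γ_{s+i}(H)`. Each `𝔇ₙˢ(H)`
is a normal subgroup, and `h ∈ 𝔇ˢ_{n+1}(H)` iff `[h, x] ∈ 𝔇ₙ^{s+1}(H)` for all `x ∈ Γ_{s+1}(H)`.
Since `p` has finite image, `𝔇ₙ(H) ⊇ ker p` has finite index, and we induct on `n` for all groups
with this property. For `n = 0`, `𝔇₀(H) = 1`, so `H` is finite. For the step put `M = 𝔇ₙ¹(H)`: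
`𝔇_{n+1}(H)` maps into the centre of `H/M`, which thus has finite index, so `(H/M)'` is finite by
Schur's theorem and `M ∩ H'` has finite index in `H' = Γ₂(H)`. As `Γᵢ(H') ≤ Γ_{i+1}(H)`, we get
`M ∩ H' ≤ 𝔇ₙ(H')`, and induction applied to `H'` shows that `Γ_{n+1}(H') = Γ_{n+2}(H)` is finite.
-/

open Subgroup

section Commutator

variable {G : Type*} [Group G]

lemma commutatorElement_mul_mem_center_left {a z : G} (b : G) (hz : z ∈ center G) :
    ⁅a * z, b⁆ = ⁅a, b⁆ := by
  rw [mem_center_iff] at hz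
  simp only [commutatorElement_def, mul_inv_rev, mul_assoc, ← hz b, mul_inv_cancel_left]

lemma commutatorElement_mul_mem_center_s8 {a b z w : G} (hz : z ∈ center G) (hw : w ∈ center G) :
    ⁅a * z, b * w⁆ = ⁅a, b⁆ := by
  rw [commutatorElement_mul_mem_center_left _ hz, ← commutatorElement_inv,
    commutatorElement_mul_mem_center_left _ hw, commutatorElement_inv]

instance finite_commutatorSet_of_finiteIndex_center [(center G).FiniteIndex] :
    Finite (commutatorSet G) := by
  have : commutatorSet G ⊆
      Set.range fun q : (G ⧸ center G) × (G ⧸ center G) => ⁅q.1.out, q.2.out⁆ := by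
    rintro _ ⟨a, b, rfl⟩
    obtain ⟨z, hz⟩ := QuotientGroup.mk_out_eq_mul (center G) a
    obtain ⟨w, hw⟩ := QuotientGroup.mk_out_eq_mul (center G) b
    exact ⟨(a, b), by simp only [hz, hw, commutatorElement_mul_mem_center_s8 z.2 w.2]⟩
  exact ((Set.finite_range _).subset this).to_subtype

lemma finiteIndex_subgroupOf_commutator (N : Subgroup G) [N.Normal]
    [Finite (commutator (G ⧸ N))] : (N.subgroupOf (commutator G)).FiniteIndex := by
  let f := (QuotientGroup.mk' N).comp (commutator G).subtype
  have hker : f.ker = N.subgroupOf (commutator G) := by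
    ext x; simp [f, mem_subgroupOf]
  have hrange : f.range = commutator (G ⧸ N) := by
    rw [MonoidHom.range_comp, range_subtype, commutator_def, commutator_def, map_commutator,
      map_top_of_surjective _ (QuotientGroup.mk'_surjective N)]
  rw [← hker]
  exact ⟨by rw [index_ker, hrange]; exact Nat.card_pos.ne'⟩

end Commutator

section frakDFrom

variable {H : Type*} [Group H]

lemma iteratedCommutator_one (xs : List H) : iteratedCommutator (1 : H) xs = 1 := by
  induction xs with
  | nil => rfl
  | cons x xs ih => simpa [iteratedCommutator] using ih

variable (H) in
/-- `𝔇ₙˢ(H)`; the index `i : Fin n` is `0`-based, so `frakDFrom H 0 n = frakD H n`. -/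
def frakDFrom (s n : ℕ) : Set H :=
  {h | ∀ xs : List H, xs.length = n →
    (∀ i : Fin xs.length, xs.get i ∈ derivedSeries H (i + s)) → iteratedCommutator h xs = 1}

lemma mem_frakDFrom_zero {s : ℕ} {h : H} : h ∈ frakDFrom H s 0 ↔ h = 1 := by
  refine ⟨fun hh => hh [] rfl fun i => i.elim0, ?_⟩
  rintro rfl xs - -
  exact iteratedCommutator_one xs

lemma mem_frakDFrom_succ {s n : ℕ} {h : H} :
    h ∈ frakDFrom H s (n + 1) ↔ ∀ x ∈ derivedSeries H s, ⁅h, x⁆ ∈ frakDFrom H (s + 1) n := by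
  constructor
  · intro hh x hx xs hlen hxs
    refine hh (x :: xs) (by simp [hlen]) (Fin.cases (by simpa using hx) fun i => ?_)
    simpa [Nat.add_right_comm _ 1 s, add_assoc] using hxs i
  · rintro hh (_ | ⟨x, xs⟩) hlen hxs
    · simp at hlen
    refine hh x (by simpa using hxs 0) xs (by simpa using hlen) fun i => ?_
    simpa [Nat.add_right_comm _ 1 s, add_assoc] using hxs i.succ

lemma conj_mem_frakDFrom {s n : ℕ} {h : H} (hh : h ∈ frakDFrom H s n) (g : H) :
    g * h * g⁻¹ ∈ frakDFrom H s n := by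
  induction n generalizing s h with
  | zero => simp_all [mem_frakDFrom_zero]
  | succ n ih =>
    rw [mem_frakDFrom_succ] at hh ⊢
    intro x hx
    have hx' : g⁻¹ * x * g⁻¹⁻¹ ∈ derivedSeries H s :=
      (derivedSeries_normal H s).conj_mem x hx g⁻¹
    have : ⁅g * h * g⁻¹, x⁆ = g * ⁅h, g⁻¹ * x * g⁻¹⁻¹⁆ * g⁻¹ := by
      simp only [commutatorElement_def]; group
    exact this ▸ ih (hh _ hx')

lemma inv_mem_frakDFrom {s n : ℕ} {h : H} (hh : h ∈ frakDFrom H s n) :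
    h⁻¹ ∈ frakDFrom H s n := by
  induction n generalizing s h with
  | zero => simp_all [mem_frakDFrom_zero]
  | succ n ih =>
    rw [mem_frakDFrom_succ] at hh ⊢
    intro x hx
    have : ⁅h⁻¹, x⁆ = h⁻¹ * ⁅h, x⁆⁻¹ * h⁻¹⁻¹ := by
      simp only [commutatorElement_def]; group
    exact this ▸ conj_mem_frakDFrom (ih (hh x hx)) h⁻¹

lemma mul_mem_frakDFrom {s n : ℕ} {h₁ h₂ : H} (hh₁ : h₁ ∈ frakDFrom H s n)
    (hh₂ : h₂ ∈ frakDFrom H s n) : h₁ * h₂ ∈ frakDFrom H s n := by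
  induction n generalizing s h₁ h₂ with
  | zero => simp_all [mem_frakDFrom_zero]
  | succ n ih =>
    rw [mem_frakDFrom_succ] at hh₁ hh₂ ⊢
    intro x hx
    have : ⁅h₁ * h₂, x⁆ = h₁ * ⁅h₂, x⁆ * h₁⁻¹ * ⁅h₁, x⁆ := by
      simp only [commutatorElement_def]; group
    exact this ▸ ih (conj_mem_frakDFrom (hh₂ x hx) h₁) (hh₁ x hx)

variable (H) in
def frakDSubgroup (s n : ℕ) : Subgroup H where
  carrier := frakDFrom H s n
  one_mem' xs _ _ := iteratedCommutator_one xs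
  mul_mem' := mul_mem_frakDFrom
  inv_mem' := inv_mem_frakDFrom

instance (s n : ℕ) : (frakDSubgroup H s n).Normal :=
  ⟨fun _ hh g => conj_mem_frakDFrom hh g⟩

variable (H) in
lemma frakDSubgroup_zero_right (s : ℕ) : frakDSubgroup H s 0 = ⊥ :=
  eq_bot_iff.mpr fun _ hh => mem_frakDFrom_zero.mp hh

variable (H) in
lemma frakDSubgroup_succ_le_comap_center (n : ℕ) :
    frakDSubgroup H 0 (n + 1) ≤
      (center (H ⧸ frakDSubgroup H 1 n)).comap (QuotientGroup.mk' _) := by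
  intro h hh
  rw [mem_comap, mem_center_iff]
  intro q
  obtain ⟨g, rfl⟩ := QuotientGroup.mk'_surjective _ q
  refine (commutatorElement_eq_one_iff_mul_comm.mp ?_).symm
  rw [← map_commutatorElement, ← MonoidHom.mem_ker, QuotientGroup.ker_mk']
  exact mem_frakDFrom_succ.mp hh g (by simp)

variable (H) in
lemma map_subtype_derivedSeries_derivedSeries (k n : ℕ) :
    (derivedSeries (derivedSeries H k) n).map (derivedSeries H k).subtype =
      derivedSeries H (k + n) := by
  induction n with
  | zero => rw [derivedSeries_zero, ← MonoidHom.range_eq_map, range_subtype, add_zero]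
  | succ n ih => rw [derivedSeries_succ, map_commutator, ih, ← derivedSeries_succ]; rfl

lemma mem_frakDFrom_derivedSeries {k s m : ℕ} {h : derivedSeries H k}
    (hh : (h : H) ∈ frakDFrom H (k + s) m) : h ∈ frakDFrom (derivedSeries H k) s m := by
  induction m generalizing s h with
  | zero =>
    simp only [mem_frakDFrom_zero] at hh ⊢
    exact Subtype.ext hh
  | succ m ih =>
    rw [mem_frakDFrom_succ] at hh ⊢
    intro x hx
    have hx' : (x : H) ∈ derivedSeries H (k + s) :=
      map_subtype_derivedSeries_derivedSeries H k s ▸ mem_map_of_mem _ hx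
    exact ih (hh x hx')

lemma subgroupOf_frakDSubgroup_le (k m : ℕ) :
    (frakDSubgroup H k m).subgroupOf (derivedSeries H k) ≤
      frakDSubgroup (derivedSeries H k) 0 m :=
  fun _ hh => mem_frakDFrom_derivedSeries hh

end frakDFrom

theorem finite_derivedSeries_of_finiteIndex_frakDSubgroup {H : Type*} [Group H] (n : ℕ)
    [(frakDSubgroup H 0 n).FiniteIndex] : Finite (derivedSeries H n) := by
  induction n generalizing H with
  | zero =>
    have : Finite H := Nat.finite_of_card_ne_zero <| by
      rw [← index_bot, ← frakDSubgroup_zero_right H 0]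
      exact FiniteIndex.index_ne_zero
    infer_instance
  | succ n ih =>
    have : (center (H ⧸ frakDSubgroup H 1 n)).FiniteIndex := by
      have := finiteIndex_of_le (frakDSubgroup_succ_le_comap_center H n)
      exact ⟨index_comap_of_surjective (center _)
        (QuotientGroup.mk'_surjective (frakDSubgroup H 1 n)) ▸ this.index_ne_zero⟩
    have : ((frakDSubgroup H 1 n).subgroupOf (derivedSeries H 1)).FiniteIndex := by
      rw [derivedSeries_one]
      exact finiteIndex_subgroupOf_commutator _
    have : (frakDSubgroup (derivedSeries H 1) 0 n).FiniteIndex :=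
      finiteIndex_of_le (subgroupOf_frakDSubgroup_le 1 n)
    have : Finite (derivedSeries (derivedSeries H 1) n) := ih
    rw [add_comm, ← map_subtype_derivedSeries_derivedSeries]
    exact Finite.Set.finite_image _ _

theorem finite_derivedSeries_of_ker_le_frakD_general
    {H G : Type*} [Group H] [Group G] (p : H →* G)
    (n : ℕ) (hker : ∀ x ∈ p.ker, x ∈ frakD H n)
    (hG : Finite G) :
    Finite (derivedSeries H n) := by
  have : (frakDSubgroup H 0 n).FiniteIndex := finiteIndex_of_le (H := p.ker) hker
  exact finite_derivedSeries_of_finiteIndex_frakDSubgroup n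

/-- If `p : H → G` is a surjective group homomorphism whose kernel is contained in
`𝔇ₙ(H)` (for a positive integer `n`), and `G` is finite, then
`Γ_{n+1}(H) = derivedSeries H n` is finite. -/
theorem finite_derivedSeries_of_ker_le_frakD
    {H G : Type*} [Group H] [Group G] (p : H →* G) (hp : Function.Surjective p)
    (n : ℕ) (hn : 0 < n) (hker : ∀ x ∈ p.ker, x ∈ frakD H n)
    (hG : Finite G) :
    Finite (derivedSeries H n) :=
  finite_derivedSeries_of_ker_le_frakD_general p n hker hG
end

section
/- Let 1 → N → H → G → 1 be an extension of groups (i.e., a surjective group homomorphism H → G with kernel N) such that every element of N lies in 𝔇_n(H), for a fixed positive integer n. If G is a perfect group, then Γ_{n+1}(H) is a perfect group. -/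
open scoped commutatorElement

/-!
Write `Γ` for `derivedSeries H` (indexed from `0`) and `A j k` for the set of `h` with
`[⋯[h, x₀], ⋯, x_{k-1}] = 1` for all `xᵢ ∈ Γ (j + i)`, so that `𝔇ₙ(H) = A 0 n` and `A j 0 = 1`.
Since `G` is perfect, `Γ (n + 1)` maps onto `G`, hence `H = A 0 n · Γ (n + 1)`. Inductively
`Γ j ≤ A j (n - j) · Γ (n + 1)`, because `⁅A j (k + 1), Γ j⁆ ≤ A (j + 1) k` and
`Γ (n + 1)` is normal. At `j = n` this gives `Γ n ≤ Γ (n + 1) = ⁅Γ n, Γ n⁆`.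
-/

namespace Subgroup

variable {H : Type*} [Group H]

/-- The centralizer of `K` modulo `N`: `{h | ∀ x ∈ K, ⁅h, x⁆ ∈ N}` when `N` is normal.
Using the normal core of `N` makes it a subgroup for every `N`. -/
def centralizerMod (K N : Subgroup H) : Subgroup H where
  carrier := {h | ∀ x ∈ K, ⁅h, x⁆ ∈ N.normalCore}
  one_mem' x _ := by simp
  mul_mem' {a b} ha hb x hx := by
    rw [commutatorElement_mul_left_eq_conj_mul]
    exact mul_mem (N.normalCore_normal.conj_mem _ (hb x hx) a) (ha x hx)
  inv_mem' {a} ha x hx := by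
    rw [commutatorElement_inv_left, ← commutatorElement_inv]
    simpa using N.normalCore_normal.conj_mem _ (inv_mem (ha x hx)) a⁻¹

theorem mem_centralizerMod {K N : Subgroup H} [N.Normal] {h : H} :
    h ∈ K.centralizerMod N ↔ ∀ x ∈ K, ⁅h, x⁆ ∈ N := by
  simp [centralizerMod, ← SetLike.mem_coe]

instance centralizerMod_normal (K N : Subgroup H) [hK : K.Normal] :
    (K.centralizerMod N).Normal where
  conj_mem h hh g x hx := by
    have := N.normalCore_normal.conj_mem _ (hh _ (by simpa using hK.conj_mem x hx g⁻¹)) g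
    rw [conjugate_commutatorElement] at this
    simpa [mul_assoc] using this

theorem commutator_centralizerMod_le (K N : Subgroup H) : ⁅K.centralizerMod N, K⁆ ≤ N :=
  commutator_le.mpr fun _ hh x hx => N.normalCore_le (hh x hx)

theorem commutator_sup_le_of_normal {A D K M : Subgroup H} [D.Normal] (hA : ⁅A, K⁆ ≤ M) :
    ⁅A ⊔ D, K⁆ ≤ M ⊔ D := by
  refine commutator_le.mpr fun g hg x hx => ?_
  obtain ⟨a, ha, d, hd, rfl⟩ := mem_sup_of_normal_right.mp hg
  rw [commutatorElement_mul_left_eq_conj_mul, sup_comm]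
  have hdx : ⁅d, x⁆ ∈ D := commutator_le_left D K (commutator_mem_commutator hd hx)
  exact mul_mem_sup (‹D.Normal›.conj_mem _ hdx a) (hA (commutator_mem_commutator ha hx))

theorem sup_ker_eq_top_of_map_eq_top {G : Type*} [Group G] {f : H →* G} {K : Subgroup H}
    (hK : K.map f = ⊤) : K ⊔ f.ker = ⊤ := by
  rw [← comap_map_eq, hK, comap_top]

end Subgroup

/-- The `h` with `[⋯[h, x₀], ⋯, x_{k-1}] = 1` for all `xᵢ ∈ derivedSeries H (j + i)`;
`𝔇ₙ(H)` is the case `j = 0`, `k = n`. -/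
def derivedAnnihilator (H : Type*) [Group H] : ℕ → ℕ → Subgroup H
  | _, 0 => ⊥
  | j, k + 1 => (derivedSeries H j).centralizerMod (derivedAnnihilator H (j + 1) k)

section DerivedAnnihilator

open Subgroup

variable {H : Type*} [Group H]

instance derivedAnnihilator_normal (j k : ℕ) : (derivedAnnihilator H j k).Normal := by
  cases k with
  | zero => exact normal_bot
  | succ k =>
    have := derivedSeries_normal H j
    exact centralizerMod_normal _ _

theorem mem_derivedAnnihilator_succ {j k : ℕ} {h : H} :
    h ∈ derivedAnnihilator H j (k + 1) ↔
      ∀ x ∈ derivedSeries H j, ⁅h, x⁆ ∈ derivedAnnihilator H (j + 1) k :=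
  mem_centralizerMod

theorem mem_derivedAnnihilator_of_iteratedCommutator_eq_one {j k : ℕ} {h : H}
    (hh : ∀ xs : List H, xs.length = k →
      (∀ i : Fin xs.length, xs.get i ∈ derivedSeries H (j + i)) → iteratedCommutator h xs = 1) :
    h ∈ derivedAnnihilator H j k := by
  induction k generalizing j h with
  | zero => exact hh [] rfl (fun i => i.elim0)
  | succ k ih =>
    refine mem_derivedAnnihilator_succ.mpr fun x hx => ih fun xs hlen hxs => ?_
    refine hh (x :: xs) (by simp [hlen]) fun ⟨i, hi⟩ => ?_
    cases i with
    | zero => simpa using hx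
    | succ i => simpa [Nat.add_assoc, Nat.add_comm 1] using hxs ⟨i, by simpa using hi⟩

theorem frakD_subset_derivedAnnihilator (n : ℕ) :
    frakD H n ⊆ derivedAnnihilator H 0 n := fun _ hh =>
  mem_derivedAnnihilator_of_iteratedCommutator_eq_one fun xs hlen hxs =>
    hh xs hlen (by simpa using hxs)

theorem derivedSeries_add_le_of_le_sup {D : Subgroup H} [D.Normal] {j k : ℕ}
    (h : derivedSeries H j ≤ derivedAnnihilator H j k ⊔ D) : derivedSeries H (j + k) ≤ D := by
  induction k generalizing j with
  | zero => simpa [derivedAnnihilator] using h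
  | succ k ih =>
    rw [← Nat.add_assoc, Nat.add_right_comm]
    refine ih ?_
    rw [derivedSeries_succ]
    exact (commutator_mono h le_rfl).trans
      (commutator_sup_le_of_normal (commutator_centralizerMod_le _ _))

end DerivedAnnihilator

theorem perfect_derivedSeries_of_ker_le_frakD_general
    {H G : Type*} [Group H] [Group G] (p : H →* G) (hp : Function.Surjective p)
    (n : ℕ) (hker : ∀ x ∈ p.ker, x ∈ frakD H n)
    (hG : commutator G = ⊤) :
    commutator (derivedSeries H n) = ⊤ := by
  have : Group.IsPerfect G := ⟨hG⟩
  have := derivedSeries_normal H (n + 1)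
  have hsup : derivedSeries H (n + 1) ⊔ p.ker = ⊤ := Subgroup.sup_ker_eq_top_of_map_eq_top
    (by rw [map_derivedSeries_eq hp, Group.IsPerfect.derivedSeries_eq_top])
  have hker' : p.ker ≤ derivedAnnihilator H 0 n := fun x hx =>
    frakD_subset_derivedAnnihilator n (hker x hx)
  have hle : derivedSeries H n ≤ derivedSeries H (n + 1) := by
    simpa using derivedSeries_add_le_of_le_sup (j := 0)
      (by rw [derivedSeries_zero, ← hsup, sup_comm]; exact sup_le_sup_right hker' _)
  rw [← Group.isPerfect_def, Subgroup.isPerfect_iff, ← derivedSeries_succ]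
  exact le_antisymm (derivedSeries_antitone H (Nat.le_succ n)) hle

/-- If `p : H → G` is a surjective group homomorphism whose kernel is contained in
`𝔇ₙ(H)` (for a positive integer `n`), and `G` is perfect, then
`Γ_{n+1}(H) = derivedSeries H n` is a perfect group. -/
theorem perfect_derivedSeries_of_ker_le_frakD
    {H G : Type*} [Group H] [Group G] (p : H →* G) (hp : Function.Surjective p)
    (n : ℕ) (hn : 0 < n) (hker : ∀ x ∈ p.ker, x ∈ frakD H n)
    (hG : commutator G = ⊤) :
    commutator (derivedSeries H n) = ⊤ :=
  perfect_derivedSeries_of_ker_le_frakD_general p hp n hker hG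
end

section
/- Let G be a finitely generated group and n a positive integer such that γ_{n+1}(G) is finitely generated. Then γ_k(G) is finitely generated for each 1 ≤ k ≤ n+1. -/
/-!
If `S` generates `G` and `γ_k = ⟨C⟩ γ_{k+1}`, then the commutators `⁅c, s⁆` (`c ∈ C`, `s ∈ S`)
generate `γ_{k+1}` modulo `γ_{k+2}`: together with `γ_{k+2}` they generate a subgroup lying
between `γ_{k+2} = ⁅γ_{k+1}, G⁆` and `γ_{k+1}`, hence a normal one, and a normal subgroup contains
`⁅⟨A⟩, ⟨B⟩⁆` as soon as it contains all `⁅a, b⁆`. So for finitely generated `G` each `γ_k` is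
finitely generated modulo `γ_{k+1}`, and finite generation descends from `γ_{n+1}` to every `γ_k`.
-/

open scoped commutatorElement

namespace Subgroup

variable {G : Type*} [Group G]

theorem commutator_closure_le {A B : Set G} {N : Subgroup G} [N.Normal]
    (h : ∀ a ∈ A, ∀ b ∈ B, ⁅a, b⁆ ∈ N) : ⁅closure A, closure B⁆ ≤ N := by
  rw [← QuotientGroup.ker_mk' N, ← map_eq_bot_iff, map_commutator, MonoidHom.map_closure,
    MonoidHom.map_closure, commutator_eq_bot_iff_le_centralizer, centralizer_closure, closure_le]
  rintro _ ⟨a, ha, rfl⟩ _ ⟨b, hb, rfl⟩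
  rw [eq_comm, ← commutatorElement_eq_one_iff_mul_comm, ← map_commutatorElement]
  exact (QuotientGroup.eq_one_iff _).mpr (h a ha b hb)

theorem FG.of_closure_sup_eq {C : Set G} {H K : Subgroup G} (hC : C.Finite) (hK : K.FG)
    (h : closure C ⊔ K = H) : H.FG :=
  h ▸ ((fg_iff _).mpr ⟨C, rfl, hC⟩).sup hK

theorem closure_image2_commutatorElement_sup_lowerCentralSeries_eq {S C : Set G}
    (hS : closure S = ⊤) {k : ℕ}
    (hC : closure C ⊔ (⊤ : Subgroup G).lowerCentralSeries (k + 1) =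
      (⊤ : Subgroup G).lowerCentralSeries k) :
    closure (Set.image2 (⁅·, ·⁆) C S) ⊔ (⊤ : Subgroup G).lowerCentralSeries (k + 2) =
      (⊤ : Subgroup G).lowerCentralSeries (k + 1) := by
  set M := closure (Set.image2 (⁅·, ·⁆) C S) ⊔ (⊤ : Subgroup G).lowerCentralSeries (k + 2)
  have hC_le : C ⊆ (⊤ : Subgroup G).lowerCentralSeries k :=
    hC ▸ subset_closure.trans (SetLike.coe_subset_coe.mpr le_sup_left)
  have hM_le : M ≤ (⊤ : Subgroup G).lowerCentralSeries (k + 1) := by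
    refine sup_le ((closure_le _).mpr ?_) (lowerCentralSeries_antitone _ (Nat.le_succ _))
    rintro _ ⟨c, hc, s, -, rfl⟩
    exact commutator_mem_commutator (hC_le hc) (mem_top s)
  have : M.Normal := commutator_top_right_le_iff.mp <|
    (commutator_mono hM_le le_rfl).trans le_sup_right
  have hgen : ⁅closure (C ∪ (⊤ : Subgroup G).lowerCentralSeries (k + 1)), closure S⁆ ≤ M :=
    commutator_closure_le fun x hx s hs ↦ hx.elim
      (fun hc ↦ mem_sup_left (subset_closure (Set.mem_image2_of_mem hc hs)))
      (fun hx ↦ mem_sup_right (commutator_mem_commutator hx (mem_top s)))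
  rw [closure_union, closure_eq, hC, hS] at hgen
  exact le_antisymm hM_le hgen

theorem exists_finite_closure_sup_lowerCentralSeries_succ_eq (hG : Group.FG G) (k : ℕ) :
    ∃ C : Set G, C.Finite ∧ closure C ⊔ (⊤ : Subgroup G).lowerCentralSeries (k + 1) =
      (⊤ : Subgroup G).lowerCentralSeries k := by
  obtain ⟨S, hS, hS_fin⟩ := Group.fg_iff.mp hG
  induction k with
  | zero => exact ⟨S, hS_fin, by rw [hS, top_sup_eq, lowerCentralSeries_zero]⟩
  | succ k ih =>
    obtain ⟨C, hC_fin, hC⟩ := ih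
    exact ⟨_, hC_fin.image2 _ hS_fin,
      closure_image2_commutatorElement_sup_lowerCentralSeries_eq hS hC⟩

theorem fg_lowerCentralSeries_of_fg_succ (hG : Group.FG G) {k : ℕ}
    (h : ((⊤ : Subgroup G).lowerCentralSeries (k + 1)).FG) :
    ((⊤ : Subgroup G).lowerCentralSeries k).FG :=
  let ⟨_, hC_fin, hC⟩ := exists_finite_closure_sup_lowerCentralSeries_succ_eq hG k
  FG.of_closure_sup_eq hC_fin h hC

end Subgroup

theorem fg_lowerCentralSeries_of_fg_general
    {G : Type*} [Group G] (hG : Group.FG G) (n : ℕ)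
    (h : Group.FG ((⊤ : Subgroup G).lowerCentralSeries n)) :
    ∀ k ≤ n, Group.FG ((⊤ : Subgroup G).lowerCentralSeries k) := by
  intro k hk
  rw [Group.fg_iff_subgroup_fg] at h ⊢
  induction hk using Nat.decreasingInduction with
  | self => exact h
  | of_succ k _ ih => exact Subgroup.fg_lowerCentralSeries_of_fg_succ hG ih

/-- If `G` is a finitely generated group and `γ_{n+1}(G) = lowerCentralSeries G n` is
finitely generated for a positive integer `n`, then `γ_k(G)` is finitely generated for
each `1 ≤ k ≤ n + 1`, i.e. `lowerCentralSeries G k` is finitely generated for all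
`k ≤ n`. -/
theorem fg_lowerCentralSeries_of_fg
    {G : Type*} [Group G] (hG : Group.FG G) (n : ℕ) (hn : 0 < n)
    (h : Group.FG ((⊤ : Subgroup G).lowerCentralSeries n)) :
    ∀ k ≤ n, Group.FG ((⊤ : Subgroup G).lowerCentralSeries k) :=
  fg_lowerCentralSeries_of_fg_general hG n h
end

section
/- Let F be a free group and R a normal subgroup of F such that the quotient G = F/R is a Schur group; in terms of the presentation this means R · [F, F] = F (G is perfect) and R ∩ [F, F] = [R, F] (the Schur multiplier of G, given by Hopf's formula (R ∩ [F, F])/[R, F], is trivial). Then for every k ≥ 1, R ∩ γ_{k+1}(F) = γ_{k+1}(R, F); equivalently, the k-nilpotent multiplier (R ∩ γ_{k+1}(F))/γ_{k+1}(R, F) of G is trivial. -/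
/-!
Put `N = γ_{k+1}(R, F)`, `H = F / N` and `G = F / R`. The kernel `R / N` of `H → G` lies in the
`k`-th centre of `H`, so by the three subgroups lemma it commutes with `L = γ_k(H)`. As `G` is
perfect, `L` still maps onto `G`; thus `L → G` is a central extension and `H = L · (R / N)`, whence
`γ_{k+1}(H) = [L, H] = [L, L]`. Since `F` is free, `F → G` lifts to `L`, and then the vanishing of
`(R ∩ [F, F]) / [R, F]` forces the kernel of the central extension `L → G` to meet `[L, L]`
trivially. Hence `(R / N) ∩ γ_{k+1}(H) = 1`, that is, `R ∩ γ_{k+1}(F) ≤ N`.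
-/

/-- The relative lower central series `γ_{k+1}(R, F)`: `γ₁(R, F) = R` and
`γ_{k+1}(R, F) = [γ_k(R, F), F]`, so `relLowerCentralSeries R k = γ_{k+1}(R, F)`. -/
def relLowerCentralSeries {F : Type*} [Group F] (R : Subgroup F) : ℕ → Subgroup F
  | 0 => R
  | k + 1 => ⁅relLowerCentralSeries R k, (⊤ : Subgroup F)⁆

open Subgroup Group
open scoped commutatorElement

section Commutators

variable {G : Type*} [Group G]

theorem Subgroup.commutator_commutator_le_of_rotate_s14 {H₁ H₂ H₃ N : Subgroup G} [N.Normal]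
    (h1 : ⁅⁅H₂, H₃⁆, H₁⁆ ≤ N) (h2 : ⁅⁅H₃, H₁⁆, H₂⁆ ≤ N) : ⁅⁅H₁, H₂⁆, H₃⁆ ≤ N := by
  rw [← QuotientGroup.ker_mk' N, ← map_eq_bot_iff, map_commutator, map_commutator] at h1 h2 ⊢
  exact commutator_commutator_eq_bot_of_rotate h1 h2

theorem Subgroup.commutator_lowerCentralSeries_upperCentralSeries_le_s14 (i j : ℕ) :
    ⁅(⊤ : Subgroup G).lowerCentralSeries i, upperCentralSeries G (i + j + 1)⁆ ≤
      upperCentralSeries G j := by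
  induction i generalizing j with
  | zero =>
    rw [lowerCentralSeries_zero, commutator_comm, zero_add]
    exact commutator_upperCentralSeries_top_le G j
  | succ i ih =>
    rw [lowerCentralSeries_succ]
    apply commutator_commutator_le_of_rotate_s14
    · calc ⁅⁅⊤, upperCentralSeries G (i + 1 + j + 1)⁆, (⊤ : Subgroup G).lowerCentralSeries i⁆
          ≤ ⁅upperCentralSeries G (i + j + 1), (⊤ : Subgroup G).lowerCentralSeries i⁆ := by
            rw [commutator_comm ⊤, show i + 1 + j + 1 = i + j + 1 + 1 by omega]
            exact commutator_mono (commutator_upperCentralSeries_top_le G _) le_rfl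
        _ ≤ upperCentralSeries G j := by
            rw [commutator_comm]
            exact ih j
    · calc ⁅⁅upperCentralSeries G (i + 1 + j + 1), (⊤ : Subgroup G).lowerCentralSeries i⁆, ⊤⁆
          ≤ ⁅upperCentralSeries G (j + 1), ⊤⁆ := by
            rw [commutator_comm (upperCentralSeries G _),
              show i + 1 + j + 1 = i + (j + 1) + 1 by omega]
            exact commutator_mono (ih (j + 1)) le_rfl
        _ ≤ upperCentralSeries G j := commutator_upperCentralSeries_top_le G j

theorem Subgroup.commutator_top_le_of_sup_eq_top {X A N : Subgroup G} [N.Normal]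
    (hAN : A ⊔ N = ⊤) (hXN : ⁅X, N⁆ = ⊥) : ⁅X, ⊤⁆ ≤ ⁅X, A⁆ := by
  rw [commutator_le]
  intro x hx y _
  obtain ⟨a, ha, m, hm, rfl⟩ := mem_sup_of_normal_right.mp (hAN ▸ mem_top y)
  have hxm : Commute m x :=
    mem_centralizer_iff.mp (commutator_eq_bot_iff_le_centralizer.mp hXN hx) m hm
  have : ⁅x, a * m⁆ = ⁅x, a⁆ := calc
    ⁅x, a * m⁆ = x * a * (m * x⁻¹) * m⁻¹ * a⁻¹ := by group
    _ = ⁅x, a⁆ := by rw [hxm.inv_right.eq]; group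
  exact this ▸ commutator_mem_commutator hx ha

theorem isPerfect_quotient_of_sup_commutator_eq_top {N : Subgroup G} [N.Normal]
    (h : N ⊔ commutator G = ⊤) : IsPerfect (G ⧸ N) := by
  rw [isPerfect_def, ← map_top_of_surjective _ (QuotientGroup.mk'_surjective N), commutator_def,
    ← map_top_of_surjective _ (QuotientGroup.mk'_surjective N), ← map_commutator, ← commutator_def,
    map_eq_map_iff, QuotientGroup.ker_mk', sup_comm, h, top_sup_eq]

end Commutators

section RelativeLowerCentralSeries

variable {G : Type*} [Group G]

instance relLowerCentralSeries_normal (R : Subgroup G) [R.Normal] (k : ℕ) :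
    (relLowerCentralSeries R k).Normal := by
  induction k with
  | zero => assumption
  | succ k _ => exact commutator_normal _ _

theorem relLowerCentralSeries_le_self (R : Subgroup G) [R.Normal] (k : ℕ) :
    relLowerCentralSeries R k ≤ R := by
  induction k with
  | zero => exact le_rfl
  | succ k ih => exact (commutator_le_left _ _).trans ih

theorem relLowerCentralSeries_le_lowerCentralSeries (R : Subgroup G) (k : ℕ) :
    relLowerCentralSeries R k ≤ (⊤ : Subgroup G).lowerCentralSeries k := by
  induction k with
  | zero => exact le_top
  | succ k ih => exact commutator_mono ih le_rfl

theorem relLowerCentralSeries_succ' (R : Subgroup G) (k : ℕ) :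
    relLowerCentralSeries R (k + 1) = relLowerCentralSeries ⁅R, ⊤⁆ k := by
  induction k with
  | zero => rfl
  | succ k ih => exact congrArg (⁅·, ⊤⁆) ih

theorem map_relLowerCentralSeries {H : Type*} [Group H] {f : G →* H}
    (hf : Function.Surjective f) (R : Subgroup G) (k : ℕ) :
    (relLowerCentralSeries R k).map f = relLowerCentralSeries (R.map f) k := by
  induction k with
  | zero => rfl
  | succ k ih =>
    simp only [relLowerCentralSeries, map_commutator, ih, map_top_of_surjective f hf]

theorem le_upperCentralSeries_of_relLowerCentralSeries_eq_bot {R : Subgroup G} {k : ℕ}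
    (h : relLowerCentralSeries R k = ⊥) : R ≤ Subgroup.upperCentralSeries G k := by
  induction k generalizing R with
  | zero => exact h.le
  | succ k ih =>
    rw [relLowerCentralSeries_succ'] at h
    exact fun x hx ↦ Subgroup.mem_upperCentralSeries_succ_iff.mpr fun y ↦
      ih h (commutator_mem_commutator hx (mem_top y))

end RelativeLowerCentralSeries

section Schur

variable {F : Type*} [Group F] [IsFreeGroup F] {R : Subgroup F} [R.Normal]

theorem ker_inf_commutator_eq_bot_of_le_center (hmult : R ⊓ commutator F = ⁅R, ⊤⁆)
    {E : Type*} [Group E] {q : E →* F ⧸ R} (hq : Function.Surjective q)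
    (hcen : q.ker ≤ center E) : q.ker ⊓ commutator E = ⊥ := by
  obtain ⟨φ, hφ⟩ : ∃ φ : F →* E, q.comp φ = QuotientGroup.mk' R :=
    ⟨IsFreeGroup.lift fun a ↦ (hq _).choose,
      IsFreeGroup.ext_hom fun a ↦ by
        rw [MonoidHom.comp_apply, IsFreeGroup.lift_of]; exact (hq _).choose_spec⟩
  have hker : ∀ X : Subgroup E, ⁅X, q.ker⁆ = ⊥ := fun X ↦ le_bot_iff.mp <|
    (commutator_mono le_top le_rfl).trans <| by
      rw [commutator_comm, commutator_top_right_eq_bot_iff_le_center.mpr hcen]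
  have hsup : φ.range ⊔ q.ker = ⊤ := by
    rw [← comap_map_eq, ← MonoidHom.range_comp, hφ, QuotientGroup.range_mk', comap_top]
  have hφR : R.map φ ≤ q.ker := by
    rw [map_le_iff_le_comap, MonoidHom.comap_ker, hφ, QuotientGroup.ker_mk']
  have hcomm : commutator E ≤ (commutator F).map φ := calc
    commutator E = ⁅⊤, ⊤⁆ := commutator_def E
    _ ≤ ⁅φ.range, ⊤⁆ :=
      (commutator_top_le_of_sup_eq_top hsup (hker ⊤)).trans_eq (commutator_comm _ _)
    _ ≤ ⁅φ.range, φ.range⁆ := commutator_top_le_of_sup_eq_top hsup (hker _)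
    _ = (commutator F).map φ := (map_commutator_eq F φ).symm
  rw [eq_bot_iff]
  rintro _ ⟨hxq, hxc⟩
  obtain ⟨w, hw, rfl⟩ := hcomm hxc
  have hwR : w ∈ R := by
    rw [← QuotientGroup.ker_mk' R, ← hφ]; exact hxq
  have hwRF : w ∈ ⁅R, ⊤⁆ := hmult.le ⟨hwR, hw⟩
  have : φ w ∈ ⁅q.ker, ⊤⁆ :=
    commutator_mono hφR le_top (map_commutator R ⊤ φ ▸ mem_map_of_mem φ hwRF)
  rwa [commutator_top_right_eq_bot_iff_le_center.mpr hcen] at this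

theorem ker_inf_lowerCentralSeries_eq_bot [IsPerfect (F ⧸ R)]
    (hmult : R ⊓ commutator F = ⁅R, ⊤⁆) {H : Type*} [Group H] {p : H →* F ⧸ R}
    (hp : Function.Surjective p) {c : ℕ} (hc : p.ker ≤ Subgroup.upperCentralSeries H c) :
    p.ker ⊓ (⊤ : Subgroup H).lowerCentralSeries c = ⊥ := by
  cases c with
  | zero => rw [Subgroup.upperCentralSeries_zero, le_bot_iff] at hc; simp [hc]
  | succ c =>
  set L := (⊤ : Subgroup H).lowerCentralSeries c
  have hLN : ⁅L, p.ker⁆ = ⊥ := le_bot_iff.mp <| (commutator_mono le_rfl hc).trans <|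
    commutator_lowerCentralSeries_upperCentralSeries_le_s14 c 0
  have hLp : L.map p = ⊤ := by
    rw [map_lowerCentralSeries, map_top_of_surjective p hp, IsPerfect.lowerCentralSeries_eq_top]
  have hLsup : L ⊔ p.ker = ⊤ := by rw [← comap_map_eq, hLp, comap_top]
  have hq : Function.Surjective (p.comp L.subtype) := by
    rw [← MonoidHom.range_eq_top, MonoidHom.range_comp, range_subtype, hLp]
  have hqcen : (p.comp L.subtype).ker ≤ center L := fun y hy ↦ mem_center_iff.mpr fun z ↦
    Subtype.ext <|
      (mem_centralizer_iff.mp (commutator_eq_bot_iff_le_centralizer.mp hLN z.2) y hy).symm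
  rw [eq_bot_iff]
  rintro x ⟨hxp, hxL⟩
  obtain ⟨y, hy, rfl⟩ : x ∈ (commutator L).map L.subtype := by
    rw [map_subtype_commutator]; exact commutator_top_le_of_sup_eq_top hLsup hLN hxL
  have := (ker_inf_commutator_eq_bot_of_le_center hmult hq hqcen).le ⟨hxp, hy⟩
  rw [mem_bot] at this ⊢
  simp [this]

end Schur

/-- Let `F` be a free group and `R` a normal subgroup of `F` such that `F ⧸ R` is a
Schur group, i.e. `R · [F, F] = F` (perfectness) and `R ∩ [F, F] = [R, F]` (triviality of
the Schur multiplier via Hopf's formula). Then for every `k ≥ 1`,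
`R ∩ γ_{k+1}(F) = γ_{k+1}(R, F)`; that is, the `k`-nilpotent multiplier of `F ⧸ R` is
trivial. -/
theorem inf_lowerCentralSeries_eq_relLowerCentralSeries_of_schur
    {F : Type*} [Group F] [IsFreeGroup F] (R : Subgroup F) [R.Normal]
    (hperf : R ⊔ commutator F = ⊤)
    (hmult : R ⊓ commutator F = ⁅R, (⊤ : Subgroup F)⁆) :
    ∀ k, 1 ≤ k → R ⊓ (⊤ : Subgroup F).lowerCentralSeries k = relLowerCentralSeries R k := by
  intro k _
  refine le_antisymm ?_ (le_inf (relLowerCentralSeries_le_self R k)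
    (relLowerCentralSeries_le_lowerCentralSeries R k))
  have : IsPerfect (F ⧸ R) := isPerfect_quotient_of_sup_commutator_eq_top hperf
  set N := relLowerCentralSeries R k
  let p : F ⧸ N →* F ⧸ R := QuotientGroup.lift N (QuotientGroup.mk' R) <| by
    rw [QuotientGroup.ker_mk']; exact relLowerCentralSeries_le_self R k
  have hp : p.ker = R.map (QuotientGroup.mk' N) := by
    rw [QuotientGroup.ker_lift, QuotientGroup.ker_mk']
  have hpZ : p.ker ≤ Subgroup.upperCentralSeries (F ⧸ N) k := by
    rw [hp]
    refine le_upperCentralSeries_of_relLowerCentralSeries_eq_bot ?_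
    rw [← map_relLowerCentralSeries (QuotientGroup.mk'_surjective N), Subgroup.map_eq_bot_iff,
      QuotientGroup.ker_mk']
  have hbot := ker_inf_lowerCentralSeries_eq_bot hmult
    (QuotientGroup.lift_surjective_of_surjective _ _ (QuotientGroup.mk'_surjective R) _) hpZ
  rw [← QuotientGroup.ker_mk' N, ← Subgroup.map_eq_bot_iff, eq_bot_iff, ← hbot]
  refine (map_inf_le _ _ _).trans (inf_le_inf hp.ge ?_)
  rw [map_lowerCentralSeries, map_top_of_surjective _ (QuotientGroup.mk'_surjective N)]
end

section
/- Let F be a free group and R a normal subgroup of F such that the quotient group F/R is finite, and let k ≥ 1. Then the quotient group (R ∩ γ_{k+1}(F))/γ_{k+1}(R, F) is finite. -/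
/-!
Put `N = γ_{k+1}(R, F)`. In `F ⧸ N` the relative lower central series of the image of `R` dies at
step `k`, so that image lies in the `k`-th centre `Z_k(F ⧸ N)`, which therefore has finite index.
By Baer's theorem `γ_{k+1}(F ⧸ N)` is then finite, and `(R ∩ γ_{k+1}(F)) ⧸ N` embeds into it.

Baer's theorem (`Z_k(G)` of finite index implies `γ_{k+1}(G)` finite) goes by induction on `k`
through `G ⧸ Z(G)`: the subgroup `K = γ_{k+1}(G)` is then finite modulo the centre and centralised
by `Z_{k+1}(G)`, which has finite index. Such a `K` has only finitely many commutators `⁅x, g⁆`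
with `x ∈ K`; hence `⁅K, K⁆` is finite by Schur's theorem, and modulo `⁅K, K⁆` the subgroup
`⁅K, G⁆` is abelian, finitely generated and torsion.
-/

open QuotientGroup
open scoped commutatorElement

section Commutator

variable {G : Type*} [Group G]

theorem commutatorElement_mul_mul_of_mem_center {x y z c : G} (hz : z ∈ Subgroup.center G)
    (hc : Commute c x) : ⁅x * z, y * c⁆ = ⁅x, y⁆ := by
  have hyc : z * (y * c) * z⁻¹ = y * c := by
    rw [(Subgroup.mem_center_iff.mp hz (y * c)).symm, mul_inv_cancel_right]
  have hx : c * x⁻¹ * c⁻¹ = x⁻¹ := by rw [hc.inv_right.eq, mul_inv_cancel_right]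
  calc ⁅x * z, y * c⁆ = x * (z * (y * c) * z⁻¹) * x⁻¹ * c⁻¹ * y⁻¹ := by
        simp only [commutatorElement_def, mul_inv_rev, mul_assoc]
    _ = x * y * (c * x⁻¹ * c⁻¹) * y⁻¹ := by simp only [hyc, mul_assoc]
    _ = ⁅x, y⁆ := by rw [hx, commutatorElement_def]

theorem commutatorElement_pow_of_commute {x y : G} (h : Commute x (y * x * y⁻¹)) (n : ℕ) :
    ⁅x, y⁆ ^ n = ⁅x ^ n, y⁆ := by
  have hxy : ⁅x, y⁆ = x * (y * x * y⁻¹)⁻¹ := by group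
  rw [hxy, h.inv_right.mul_pow, inv_pow, conj_pow]
  group

end Commutator

namespace Subgroup

section Finiteness

variable {G G' : Type*} [Group G] [Group G']

theorem finite_of_finite_ker_of_finite_map (f : G →* G') {H : Subgroup G} [Finite f.ker]
    [Finite (H.map f)] : Finite H := by
  refine (f.comp H.subtype).finite_iff_finite_ker_range.mpr ⟨?_, ?_⟩
  · rw [← MonoidHom.comap_ker]
    exact Finite.of_injective (fun x => (⟨x.1.1, x.2⟩ : f.ker)) fun a b h => by
      simpa [Subtype.ext_iff] using h
  · rwa [MonoidHom.range_comp, range_subtype]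

theorem finite_quotient_subgroupOf_of_finite_map {H N : Subgroup G} [N.Normal]
    [Finite (H.map (mk' N))] : Finite (H ⧸ N.subgroupOf H) := by
  have h : Finite (H ⧸ ((mk' N).subgroupMap H).ker) := Finite.of_equiv _
    (quotientKerEquivOfSurjective _ ((mk' N).subgroupMap_surjective H)).symm.toEquiv
  rwa [ker_subgroupMap, ker_mk'] at h

variable {f : G →* G'}

theorem map_center_le_center_of_surjective (hf : Function.Surjective f) :
    (center G).map f ≤ center G' := by
  rintro _ ⟨z, hz, rfl⟩
  refine mem_center_iff.mpr fun g' => ?_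
  obtain ⟨g, rfl⟩ := hf g'
  rw [← map_mul, ← map_mul, mem_center_iff.mp hz g]

theorem finite_map_center_map_of_surjective (hf : Function.Surjective f) {K : Subgroup G}
    [Finite (K.map (mk' (center G)))] : Finite ((K.map f).map (mk' (center G'))) := by
  have hle : center G ≤ (center G').comap f :=
    map_le_iff_le_comap.mp (map_center_le_center_of_surjective hf)
  have h : (K.map f).map (mk' (center G')) =
      (K.map (mk' (center G))).map (QuotientGroup.map _ _ f hle) := by
    rw [Subgroup.map_map, Subgroup.map_map]
    rfl
  rw [h]
  exact Finite.of_surjective _ (MonoidHom.subgroupMap_surjective _ _)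

theorem finiteIndex_centralizer_map_of_surjective (hf : Function.Surjective f) {K : Subgroup G}
    [(centralizer (K : Set G)).FiniteIndex] : (centralizer (K.map f : Set G')).FiniteIndex := by
  have : ((centralizer (K : Set G)).map f).FiniteIndex :=
    ⟨ne_zero_of_dvd_ne_zero FiniteIndex.index_ne_zero (index_map_dvd _ hf)⟩
  rw [coe_map]
  exact finiteIndex_of_le (map_centralizer_le_centralizer_image _ f)

end Finiteness

section FiniteModuloCenter

variable {G : Type*} [Group G] {K : Subgroup G} [Finite (K.map (mk' (center G)))]
  [(centralizer (K : Set G)).FiniteIndex]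

/-- For `x ∈ K`, `⁅x, y⁆` depends only on `x` modulo the centre and on the coset
`y * centralizer K`. -/
theorem finite_commutators_of_finite_map_center :
    {g : G | ∃ x ∈ K, ∃ y ∈ (⊤ : Subgroup G), ⁅x, y⁆ = g}.Finite := by
  let f : K.map (mk' (center G)) × (G ⧸ centralizer (K : Set G)) → G :=
    fun p => ⁅(p.1 : G ⧸ center G).out, p.2.out⁆
  refine (Set.finite_range f).subset ?_
  rintro _ ⟨x, hx, y, -, rfl⟩
  refine ⟨(⟨x, mem_map_of_mem _ hx⟩, (y : G ⧸ centralizer (K : Set G))), ?_⟩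
  obtain ⟨z, hz⟩ := mk_out_eq_mul (center G) x
  obtain ⟨c, hc⟩ := mk_out_eq_mul (centralizer (K : Set G)) y
  simp only [f, hz, hc]
  exact commutatorElement_mul_mul_of_mem_center z.2 (mem_centralizer_iff.mp c.2 x hx).symm

theorem finite_commutator_self_of_finite_map_center : Finite (⁅K, K⁆ : Subgroup G) := by
  have : Finite (commutatorSet K) := by
    refine (Set.Finite.of_finite_image
      ((finite_commutators_of_finite_map_center (K := K)).subset ?_)
      Subtype.val_injective.injOn).to_subtype
    rintro _ ⟨_, ⟨a, b, rfl⟩, rfl⟩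
    exact ⟨a, a.2, b, mem_top _, rfl⟩
  rw [← K.map_subtype_commutator]
  exact Finite.of_surjective _ (K.subtype.subgroupMap_surjective _)

open scoped IsMulCommutative in
theorem finite_commutator_top_of_commutator_self_eq_bot [K.Normal] (hK : ⁅K, K⁆ = ⊥) :
    Finite (⁅K, ⊤⁆ : Subgroup G) := by
  have hcomm : ∀ a ∈ K, ∀ b ∈ K, Commute a b := fun a ha b hb =>
    mem_centralizer_iff.mp (commutator_eq_bot_iff_le_centralizer.mp hK hb) a ha
  have hle : ⁅K, ⊤⁆ ≤ K := commutator_le_left K ⊤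
  have : IsMulCommutative (⁅K, ⊤⁆ : Subgroup G) :=
    ⟨⟨fun a b => Subtype.ext (hcomm _ (hle a.2) _ (hle b.2))⟩⟩
  have : Group.FG (⁅K, ⊤⁆ : Subgroup G) := (Group.fg_iff_subgroup_fg _).mpr
    ((fg_iff _).mpr ⟨_, (commutator_def K ⊤).symm, finite_commutators_of_finite_map_center⟩)
  refine CommGroup.finite_of_fg_isMulTorsion _ fun ⟨g, hg⟩ => ?_
  rw [← (subtype_injective _).isOfFinOrder_iff]
  change IsOfFinOrder g
  rw [Subgroup.commutator_def] at hle hg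
  induction hg using closure_induction with
  | mem _ hS =>
    obtain ⟨x, hx, y, -, rfl⟩ := hS
    obtain ⟨n, hn, hxn⟩ := (isOfFinOrder_of_finite
      (⟨mk' (center G) x, mem_map_of_mem _ hx⟩ : K.map (mk' (center G)))).exists_pow_eq_one
    have hcen : x ^ n ∈ center G := by
      rw [← QuotientGroup.eq_one_iff, QuotientGroup.mk_pow]
      exact congrArg Subtype.val hxn
    refine isOfFinOrder_iff_pow_eq_one.mpr ⟨n, hn, ?_⟩
    rw [commutatorElement_pow_of_commute (hcomm x hx _ (‹K.Normal›.conj_mem x hx y)) n]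
    exact Commute.commutator_eq (mem_center_iff.mp hcen y).symm
  | one => exact IsOfFinOrder.one
  | mul a b ha hb iha ihb => exact (hcomm a (hle ha) b (hle hb)).isOfFinOrder_mul iha ihb
  | inv a _ iha => exact iha.inv

theorem finite_commutator_top_of_finite_map_center [K.Normal] :
    Finite (⁅K, ⊤⁆ : Subgroup G) := by
  have : Finite (⁅K, K⁆ : Subgroup G) := finite_commutator_self_of_finite_map_center
  set ρ := mk' (⁅K, K⁆ : Subgroup G)
  have hρ : Function.Surjective ρ := mk'_surjective _
  have : Finite ρ.ker := by rwa [ker_mk']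
  have : Finite ((K.map ρ).map (mk' (center _))) := finite_map_center_map_of_surjective hρ
  have : (centralizer (K.map ρ : Set (G ⧸ ⁅K, K⁆))).FiniteIndex :=
    finiteIndex_centralizer_map_of_surjective hρ
  have : Finite ((⁅K, ⊤⁆ : Subgroup G).map ρ) := by
    rw [map_commutator, map_top_of_surjective ρ hρ]
    refine finite_commutator_top_of_commutator_self_eq_bot ?_
    rw [← map_commutator, Subgroup.map_eq_bot_iff, ker_mk']
  exact finite_of_finite_ker_of_finite_map ρ

end FiniteModuloCenter

theorem commutator_lowerCentralSeries_upperCentralSeries_succ_eq_bot (G : Type*) [Group G]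
    (k : ℕ) : ⁅(⊤ : Subgroup G).lowerCentralSeries k, upperCentralSeries G (k + 1)⁆ = ⊥ := by
  induction k generalizing G with
  | zero => rw [upperCentralSeries_one]; exact commutator_center_right _
  | succ k ih =>
    set L := (⊤ : Subgroup G).lowerCentralSeries k
    set U := upperCentralSeries G (k + 2)
    have hUL : ⁅U, L⁆ ≤ center G := by
      rw [← ker_mk' (center G), ← Subgroup.map_eq_bot_iff, map_commutator, ← le_bot_iff,
        ← ih (G ⧸ center G), commutator_comm]
      refine commutator_mono ((map_lowerCentralSeries _ _ k).trans_le
        (lowerCentralSeries_mono k le_top)) ?_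
      exact map_le_iff_le_comap.mpr (comap_upperCentralSeries_quotient_center (k + 1)).ge
    refine commutator_commutator_eq_bot_of_rotate ?_ ?_
    · refine le_bot_iff.mp (le_trans ?_ (ih G).le)
      rw [commutator_comm L, commutator_comm ⊤]
      exact commutator_mono (commutator_upperCentralSeries_top_le G (k + 1)) le_rfl
    · rw [← le_bot_iff, ← commutator_center_left ⊤]
      exact commutator_mono hUL le_rfl

theorem finite_lowerCentralSeries_of_finiteIndex_upperCentralSeries (G : Type*) [Group G]
    (k : ℕ) [(upperCentralSeries G k).FiniteIndex] :
    Finite ((⊤ : Subgroup G).lowerCentralSeries k) := by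
  induction k generalizing G with
  | zero =>
    have h := FiniteIndex.index_ne_zero (H := upperCentralSeries G 0)
    rw [upperCentralSeries_zero, index_bot] at h
    have := Nat.finite_of_card_ne_zero h
    infer_instance
  | succ k ih =>
    have hπ : Function.Surjective (mk' (center G)) := mk'_surjective _
    have : (upperCentralSeries (G ⧸ center G) k).FiniteIndex := ⟨by
      rw [← index_comap_of_surjective _ hπ, comap_upperCentralSeries_quotient_center]
      exact FiniteIndex.index_ne_zero⟩
    have : Finite (((⊤ : Subgroup G).lowerCentralSeries k).map (mk' (center G))) := by
      rw [map_lowerCentralSeries, map_top_of_surjective _ hπ]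
      exact ih (G ⧸ center G)
    have : (centralizer ((⊤ : Subgroup G).lowerCentralSeries k : Set G)).FiniteIndex := by
      refine finiteIndex_of_le (H := upperCentralSeries G (k + 1)) ?_
      rw [← commutator_eq_bot_iff_le_centralizer, commutator_comm]
      exact commutator_lowerCentralSeries_upperCentralSeries_succ_eq_bot G k
    exact finite_commutator_top_of_finite_map_center

section RelLowerCentralSeries

variable {G G' : Type*} [Group G] [Group G']

theorem relLowerCentralSeries_succ (R : Subgroup G) (k : ℕ) :
    relLowerCentralSeries R (k + 1) = ⁅relLowerCentralSeries R k, ⊤⁆ := rfl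

instance relLowerCentralSeries_normal (R : Subgroup G) [R.Normal] :
    ∀ k, (relLowerCentralSeries R k).Normal
  | 0 => ‹R.Normal›
  | k + 1 => have := relLowerCentralSeries_normal R k; commutator_normal _ _

theorem map_relLowerCentralSeries {f : G →* G'} (hf : Function.Surjective f) (R : Subgroup G) :
    ∀ k, (relLowerCentralSeries R k).map f = relLowerCentralSeries (R.map f) k
  | 0 => rfl
  | k + 1 => by
    rw [relLowerCentralSeries_succ, relLowerCentralSeries_succ, map_commutator,
      map_relLowerCentralSeries hf R k, map_top_of_surjective f hf]

theorem le_upperCentralSeries_add_of_relLowerCentralSeries_le {H : Subgroup G} {m n : ℕ}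
    (h : relLowerCentralSeries H n ≤ upperCentralSeries G m) :
    H ≤ upperCentralSeries G (m + n) := by
  induction n generalizing m with
  | zero => exact h
  | succ n ih =>
    have h' : relLowerCentralSeries H n ≤ upperCentralSeries G (m + 1) := fun x hx =>
      mem_upperCentralSeries_succ_iff.mpr fun y => h (commutator_mem_commutator hx (mem_top y))
    rw [← add_assoc, add_right_comm]
    exact ih h'

theorem finiteIndex_upperCentralSeries_quotient_relLowerCentralSeries (R : Subgroup G)
    [R.Normal] [R.FiniteIndex] (k : ℕ) :
    (upperCentralSeries (G ⧸ relLowerCentralSeries R k) k).FiniteIndex := by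
  set ρ := mk' (relLowerCentralSeries R k)
  have hρ : Function.Surjective ρ := mk'_surjective _
  have hR : R.map ρ ≤ upperCentralSeries _ (0 + k) := by
    refine le_upperCentralSeries_add_of_relLowerCentralSeries_le ?_
    rw [← map_relLowerCentralSeries hρ, upperCentralSeries_zero, le_bot_iff,
      Subgroup.map_eq_bot_iff, ker_mk']
  rw [zero_add] at hR
  have : ((upperCentralSeries _ k).comap ρ).FiniteIndex :=
    finiteIndex_of_le (map_le_iff_le_comap.mp hR)
  exact ⟨index_comap_of_surjective _ hρ ▸ FiniteIndex.index_ne_zero⟩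

end RelLowerCentralSeries

end Subgroup

theorem finite_nilpotentMultiplier_of_finite_quotient_general
    {F : Type*} [Group F] (R : Subgroup F) [R.Normal]
    (hfin : Finite (F ⧸ R)) (k : ℕ) :
    Finite ((R ⊓ (⊤ : Subgroup F).lowerCentralSeries k : Subgroup F) ⧸
      (relLowerCentralSeries R k).subgroupOf (R ⊓ (⊤ : Subgroup F).lowerCentralSeries k)) := by
  have : R.FiniteIndex := Subgroup.finiteIndex_of_finite_quotient
  have := Subgroup.finiteIndex_upperCentralSeries_quotient_relLowerCentralSeries R k
  have := Subgroup.finite_lowerCentralSeries_of_finiteIndex_upperCentralSeries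
    (F ⧸ relLowerCentralSeries R k) k
  have hle : (R ⊓ (⊤ : Subgroup F).lowerCentralSeries k).map (mk' (relLowerCentralSeries R k)) ≤
      (⊤ : Subgroup (F ⧸ relLowerCentralSeries R k)).lowerCentralSeries k := by
    rw [← Subgroup.map_top_of_surjective _ (mk'_surjective _), ← Subgroup.map_lowerCentralSeries]
    exact Subgroup.map_mono inf_le_right
  have : Finite ((R ⊓ (⊤ : Subgroup F).lowerCentralSeries k).map
      (mk' (relLowerCentralSeries R k))) :=
    Finite.of_injective _ (Subgroup.inclusion_injective hle)
  exact Subgroup.finite_quotient_subgroupOf_of_finite_map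

/-- Let `F` be a free group and `R` a normal subgroup of `F` with `F ⧸ R` finite, and
`k ≥ 1`. Then the `k`-nilpotent multiplier `(R ∩ γ_{k+1}(F)) / γ_{k+1}(R, F)` of `F ⧸ R`
is finite. -/
theorem finite_nilpotentMultiplier_of_finite_quotient
    {F : Type*} [Group F] [IsFreeGroup F] (R : Subgroup F) [R.Normal]
    (hfin : Finite (F ⧸ R)) (k : ℕ) (hk : 1 ≤ k) :
    Finite ((R ⊓ (⊤ : Subgroup F).lowerCentralSeries k : Subgroup F) ⧸
      (relLowerCentralSeries R k).subgroupOf (R ⊓ (⊤ : Subgroup F).lowerCentralSeries k)) :=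
  finite_nilpotentMultiplier_of_finite_quotient_general R hfin k
end
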